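/- arXiv:2309.05902 — 3 statements merged into one kernel-verified Lean document; each statement's English description precedes it below -/
import Mathlib

section
/- For every natural number n ≥ 1, in the standard Game of Cycles, the line sub-game of type 2 — a path of n unmarked edges with one pre-marked directed edge attached at the left end and directed toward the path (•→•—•⋯•—•) — has Grundy value n − 1. -/
/-- Edge state on a path/cycle: `none` = unmarked, `some true` = directed "rightwards"
(from vertex `i` to vertex `i+1`), `some false` = directed "leftwards". -/
abbrev EdgeState := Option Bool

/-- Minimum excludant of a set of naturals: the least natural number not in the set. -/
noncomputable def mex (S : Set ℕ) : ℕ := sInf {n | n ∉ S}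

/-- Generic fueled Grundy value of an impartial game with move function `moves`
(the fuel always dominates the number of remaining moves in our uses, so this
computes the Sprague–Grundy value). -/
noncomputable def grundyAux {α : Type} (moves : α → Set α) : ℕ → α → ℕ
  | 0, _ => 0
  | k+1, x => mex ((grundyAux moves k) '' (moves x))

/-- A line position (list of edge states, vertex `j+1` lying between edges `j` and
`j+1`) is admissible: no non-exempt vertex is a sink (all incident edges marked and
directed toward it) and, unless `sourceAllowed`, no non-exempt vertex is a source
(all incident edges marked and directed away from it).  The left endpoint (vertex
`0`) is exempt iff `exL`, the right endpoint iff `exR`. -/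
def LineOK (sourceAllowed exL exR : Bool) (es : List EdgeState) : Prop :=
  (∀ j : ℕ, ¬ (es[j]? = some (some true) ∧ es[j+1]? = some (some false))) ∧
  (sourceAllowed = true ∨
    ∀ j : ℕ, ¬ (es[j]? = some (some false) ∧ es[j+1]? = some (some true))) ∧
  (exL = true ∨ (es.head? ≠ some (some false) ∧
    (sourceAllowed = true ∨ es.head? ≠ some (some true)))) ∧
  (exR = true ∨ (es.getLast? ≠ some (some true) ∧
    (sourceAllowed = true ∨ es.getLast? ≠ some (some false))))

/-- A legal move on a line position marks an unmarked edge with one of the two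
directions so that the resulting position is admissible. -/
def lineMoves (sourceAllowed exL exR : Bool) (es : List EdgeState) :
    Set (List EdgeState) :=
  { es' | ∃ j d, es[j]? = some none ∧ es' = es.set j (some d) ∧
      LineOK sourceAllowed exL exR es' }

/-- Grundy value (Nimber) of the line (sub-)game with `n` unmarked edges.
`l` (resp. `r`) is an optional pre-marked directed edge attached at the left
(resp. right) end of the path (`some true` pointing rightwards, `some false`
pointing leftwards); the outer endpoint of a pre-marked edge is exempt from the
no-sink (and, when sources are disallowed, no-source) restriction.
`sourceAllowed = false` gives the standard Game of Cycles, `sourceAllowed = true`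
gives Cycles with Sources. -/
noncomputable def lineNim (sourceAllowed : Bool) (l r : Option Bool) (n : ℕ) : ℕ :=
  let es : List EdgeState :=
    (l.map some).toList ++ List.replicate n none ++ (r.map some).toList
  grundyAux (lineMoves sourceAllowed l.isSome r.isSome) es.length es

/-!
A position reachable from the start is `linePos s e m = s ++ some e :: replicate m none`: a
closed part ending with the last marked edge `e`, then an open run of `m ≥ 1` unmarked edges
whose right end is a leaf, so the last edge of the run can never be marked. Its Grundy value is
`closedNim b e s ^^^ (m - 1)`. Marking inside the closed part flips `closedNim`, and such a move
exists when `closedNim = 1`. Marking the `j`-th edge of the run leaves a run of `m - 1 - j`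
behind a closed part of either parity (of unchanged parity if `j = 0`, where the direction is
forced); these values cover everything below `closedNim ^^^ (m - 1)` and miss it.
-/

namespace LineGame

theorem mex_eq_of_notMem {S : Set ℕ} {v : ℕ} (hv : v ∉ S) (hlt : ∀ u < v, u ∈ S) :
    mex S = v :=
  le_antisymm (Nat.sInf_le hv)
    (le_of_not_gt fun h => (Nat.sInf_mem (s := {n | n ∉ S}) ⟨v, hv⟩) (hlt _ h))

theorem xor_eq_of_lt_two {a : ℕ} (ha : a < 2) (k : ℕ) : a ^^^ k = 2 * (k / 2) + (a + k) % 2 := by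
  have hdiv : (a ^^^ k) / 2 = k / 2 := by
    rw [Nat.xor_div_two, Nat.div_eq_of_lt ha, Nat.zero_xor]
  have hmod : (a ^^^ k) % 2 = (a + k) % 2 := Nat.xor_mod_two_eq
  omega

theorem xor_ne_of_run_move {P a j m : ℕ} (hP : P < 2) (ha : a < 2) (hj : j + 1 < m)
    (h0 : j = 0 → a = P) : a ^^^ (m - 1 - j - 1) ≠ P ^^^ (m - 1) := by
  rw [xor_eq_of_lt_two ha, xor_eq_of_lt_two hP]
  omega

theorem lt_xor_sub_one_cases {P m w : ℕ} (hP : P < 2) (hw : w < P ^^^ (m - 1)) :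
    (∃ j a, j + 1 < m ∧ a < 2 ∧ (j = 0 → a = P) ∧ a ^^^ (m - 1 - j - 1) = w) ∨
      P = 1 ∧ (1 - P) ^^^ (m - 1) = w := by
  rw [xor_eq_of_lt_two hP] at hw
  by_cases hlow : w / 2 < (m - 1) / 2
  · refine Or.inl ⟨m - 2 - 2 * (w / 2), w % 2, by omega, by omega, by omega, ?_⟩
    rw [xor_eq_of_lt_two (by omega)]
    omega
  · rcases (by omega : P = 0 ∨ P = 1) with rfl | rfl
    · exact Or.inl ⟨0, 0, by omega, by omega, fun _ => rfl, by simp; omega⟩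
    · exact Or.inr ⟨rfl, by simp; omega⟩

-- The vertex shared by consecutive edges `a`, `c` is neither a sink nor a source.
def Agrees (a c : EdgeState) : Prop := ∀ x ∈ a, ∀ y ∈ c, x = y

theorem agrees_iff {a c : EdgeState} :
    Agrees a c ↔ ¬(a = some true ∧ c = some false) ∧ ¬(a = some false ∧ c = some true) := by
  rcases a with _ | _ | _ <;> rcases c with _ | _ | _ <;> simp [Agrees]

@[simp] theorem agrees_none_left (c : EdgeState) : Agrees none c := by simp [Agrees]

@[simp] theorem agrees_none_right (a : EdgeState) : Agrees a none := by simp [Agrees]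

@[simp] theorem agrees_some_some {x y : Bool} : Agrees (some x) (some y) ↔ x = y := by
  simp [Agrees]

theorem lineOK_iff_isChain {L : List EdgeState} :
    LineOK false true false L ↔ L.IsChain Agrees ∧ ∀ x, L.getLast? ≠ some (some x) := by
  simp only [LineOK, List.isChain_iff_getElem, agrees_iff, List.getElem?_eq_some_iff,
    Bool.false_eq_true, false_or, true_or]
  constructor
  · rintro ⟨hsink, hsource, hlast⟩
    refine ⟨fun i hi => ⟨fun h => hsink i ⟨⟨_, h.1⟩, ⟨hi, h.2⟩⟩,
      fun h => hsource i ⟨⟨_, h.1⟩, ⟨hi, h.2⟩⟩⟩, ?_⟩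
    rintro (_ | _) <;> simp_all
  · rintro ⟨hc, hl⟩
    exact ⟨fun i ⟨⟨_, ha⟩, ⟨hi, hc'⟩⟩ => (hc i hi).1 ⟨ha, hc'⟩,
      fun i ⟨⟨_, ha⟩, ⟨hi, hc'⟩⟩ => (hc i hi).2 ⟨ha, hc'⟩, trivial, hl true, hl false⟩

theorem isChain_agrees_replicate_none (k : ℕ) :
    (List.replicate k (none : EdgeState)).IsChain Agrees :=
  List.isChain_replicate_of_rel k (agrees_none_left none)

theorem isChain_agrees_some_replicate_some {d e : Bool} {k : ℕ} :
    (some d :: (List.replicate k none ++ [some e])).IsChain Agrees ↔ (k = 0 → d = e) := by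
  cases k with
  | zero => simp
  | succ k =>
    rw [List.replicate_succ, List.cons_append, List.isChain_cons_cons, ← List.cons_append,
      ← List.replicate_succ, List.isChain_append]
    simp [isChain_agrees_replicate_none, List.getLast?_replicate]

theorem mem_lineMoves_iff {sourceAllowed exL exR : Bool} {L L' : List EdgeState} :
    L' ∈ lineMoves sourceAllowed exL exR L ↔
      ∃ u v x, L = u ++ none :: v ∧ L' = u ++ some x :: v ∧ LineOK sourceAllowed exL exR L' := by
  constructor
  · rintro ⟨j, x, hj, rfl, hok⟩
    obtain ⟨hlt, hnone⟩ := List.getElem?_eq_some_iff.1 hj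
    obtain ⟨u, v, hL, -, hset⟩ := List.exists_of_set (a' := some x) hlt
    rw [hnone] at hL
    exact ⟨u, v, x, hL, hset, hset ▸ hok⟩
  · rintro ⟨u, v, x, rfl, rfl, hok⟩
    exact ⟨u.length, x, by simp, by simp, hok⟩

theorem lineOK_of_mem_lineMoves {sourceAllowed exL exR : Bool} {L L' : List EdgeState}
    (h : L' ∈ lineMoves sourceAllowed exL exR L) : LineOK sourceAllowed exL exR L' :=
  h.choose_spec.choose_spec.2.2

theorem count_none_lt_of_mem_lineMoves {sourceAllowed exL exR : Bool} {L L' : List EdgeState}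
    (h : L' ∈ lineMoves sourceAllowed exL exR L) : L'.count none < L.count none := by
  obtain ⟨u, v, x, rfl, rfl, -⟩ := mem_lineMoves_iff.1 h
  simp [List.count_append]

def linePos (s : List EdgeState) (e : Bool) (m : ℕ) : List EdgeState :=
  s ++ some e :: List.replicate m none

theorem isChain_linePos_append_iff {s : List EdgeState} {e x : Bool} {j : ℕ} :
    (linePos s e j ++ [some x]).IsChain Agrees ↔
      (s ++ [some e]).IsChain Agrees ∧ (j = 0 → e = x) := by
  rw [linePos, List.append_assoc, List.cons_append, List.isChain_split,
    isChain_agrees_some_replicate_some]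

theorem lineOK_linePos_iff {s : List EdgeState} {e : Bool} {m : ℕ} :
    LineOK false true false (linePos s e m) ↔ (s ++ [some e]).IsChain Agrees ∧ m ≠ 0 := by
  rw [lineOK_iff_isChain, linePos, List.isChain_split]
  have hrun : (some e :: List.replicate m none).IsChain Agrees := by
    rw [List.isChain_cons]
    simp [isChain_agrees_replicate_none, List.head?_replicate]
  cases m <;> simp [hrun, List.getLast?_append, List.getLast?_cons, List.getLast?_replicate]

theorem append_none_cons_eq_linePos {u v s : List EdgeState} {e : Bool} {m : ℕ}
    (h : u ++ none :: v = linePos s e m) :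
    (∃ v₀, s = u ++ none :: v₀ ∧ v = v₀ ++ some e :: List.replicate m none) ∨
      ∃ j, j < m ∧ u = linePos s e j ∧ v = List.replicate (m - 1 - j) none := by
  rcases List.append_eq_append_iff.1 h with ⟨_ | ⟨a, v₀⟩, rfl, hv⟩ | ⟨_ | ⟨a, w⟩, rfl, hw⟩
  · simp at hv
  · simp only [List.cons_append, List.cons.injEq] at hv
    exact Or.inl ⟨v₀, by rw [← hv.1], hv.2⟩
  · simp at hw
  · simp only [List.cons_append, List.cons.injEq] at hw
    obtain ⟨rfl, hrun⟩ := hw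
    obtain ⟨hlen, hw, hv⟩ := List.replicate_eq_append_iff.1 hrun
    simp only [List.length_cons, List.replicate_succ, List.cons.injEq, true_and] at hlen hv
    refine Or.inr ⟨w.length, by omega, by rw [linePos, ← hw], by rw [hv]; congr 1; omega⟩

theorem mem_lineMoves_linePos_iff {s : List EdgeState} {e : Bool} {m : ℕ} {L' : List EdgeState}
    (h : LineOK false true false (linePos s e m)) :
    L' ∈ lineMoves false true false (linePos s e m) ↔
      (∃ u v x, s = u ++ none :: v ∧ (u ++ some x :: v ++ [some e]).IsChain Agrees ∧
        L' = linePos (u ++ some x :: v) e m) ∨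
      ∃ j x, j + 1 < m ∧ (j = 0 → e = x) ∧ L' = linePos (linePos s e j) x (m - 1 - j) := by
  obtain ⟨hs, hm⟩ := lineOK_linePos_iff.1 h
  have hrun {j x} : (linePos s e j ++ [some x]).IsChain Agrees ↔ (j = 0 → e = x) := by
    rw [isChain_linePos_append_iff, and_iff_right hs]
  rw [mem_lineMoves_iff]
  constructor
  · rintro ⟨u, v, x, hL, rfl, hok⟩
    rcases append_none_cons_eq_linePos hL.symm with ⟨v₀, rfl, rfl⟩ | ⟨j, hj, rfl, rfl⟩
    · have hL' : u ++ some x :: (v₀ ++ some e :: List.replicate m none) =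
          linePos (u ++ some x :: v₀) e m := by simp [linePos]
      rw [hL', lineOK_linePos_iff] at hok
      exact Or.inl ⟨u, v₀, x, rfl, hok.1, hL'⟩
    · obtain ⟨hchain, hlen⟩ := lineOK_linePos_iff.1 hok
      exact Or.inr ⟨j, x, by omega, hrun.1 hchain, rfl⟩
  · rintro (⟨u, v, x, rfl, hchain, rfl⟩ | ⟨j, x, hj, hx, rfl⟩)
    · exact ⟨u, v ++ some e :: List.replicate m none, x, by simp [linePos],
        by simp [linePos], lineOK_linePos_iff.2 ⟨hchain, hm⟩⟩
    · refine ⟨linePos s e j, List.replicate (m - 1 - j) none, x, ?_, rfl,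
        lineOK_linePos_iff.2 ⟨hrun.2 hx, by omega⟩⟩
      rw [linePos, show m = j + (m - 1 - j + 1) by omega, List.replicate_add]
      simp [linePos, List.replicate_succ]

theorem head?_mark {u v l : List EdgeState} {x b : Bool}
    (h : (u ++ none :: v ++ l).head? = some (some b)) :
    (u ++ some x :: v ++ l).head? = some (some b) := by
  cases u <;> simp_all

theorem head?_linePos_append {s : List EdgeState} {e x : Bool} {j : ℕ} :
    (linePos s e j ++ [some x]).head? = (s ++ [some e]).head? := by
  cases s <;> simp [linePos]

-- `b` is the direction of the first edge. A segment of `k` unmarked edges between marked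
-- edges pointing `d`, `d'` has Grundy value `(k + [d ≠ d']) % 2`; the nim-sum telescopes.
def closedNim (b e : Bool) (s : List EdgeState) : ℕ :=
  (s.count none + if b = e then 0 else 1) % 2

theorem closedNim_lt_two (b e : Bool) (s : List EdgeState) : closedNim b e s < 2 :=
  Nat.mod_lt _ two_pos

theorem closedNim_mark (b e x : Bool) (u v : List EdgeState) :
    closedNim b e (u ++ some x :: v) = 1 - closedNim b e (u ++ none :: v) := by
  simp only [closedNim, List.count_append, ne_eq, reduceCtorEq, not_false_eq_true,
    List.count_cons_of_ne, List.count_cons_self]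
  split <;> omega

theorem closedNim_linePos (b e x : Bool) (s : List EdgeState) (j : ℕ) :
    closedNim b x (linePos s e j) = (closedNim b e s + j + if e = x then 0 else 1) % 2 := by
  simp only [closedNim, linePos, List.count_append, List.count_cons, List.count_replicate]
  cases b <;> cases e <;> cases x <;> simp <;> omega

theorem closedNim_linePos_zero (b e : Bool) (s : List EdgeState) :
    closedNim b e (linePos s e 0) = closedNim b e s := by
  rw [closedNim_linePos]
  simp [Nat.mod_eq_of_lt (closedNim_lt_two b e s)]

theorem exists_eq_linePos_of_mem {s : List EdgeState} {d : Bool} (h : some d ∈ s) :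
    ∃ s₀ e k, s = linePos s₀ e k := by
  induction s using List.reverseRecOn with
  | nil => simp at h
  | append_singleton t a ih =>
    rcases a with _ | e
    · obtain ⟨s₀, e, k, rfl⟩ := ih (by simpa using h)
      exact ⟨s₀, e, k + 1, by simp [linePos, List.replicate_succ']⟩
    · exact ⟨t, e, 0, by simp [linePos]⟩

theorem exists_legal_mark_of_closedNim_eq_one {b e : Bool} {s : List EdgeState}
    (hb : (s ++ [some e]).head? = some (some b)) (hs : (s ++ [some e]).IsChain Agrees)
    (h : closedNim b e s = 1) :
    ∃ u v x, s = u ++ none :: v ∧ (u ++ some x :: v ++ [some e]).IsChain Agrees := by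
  obtain ⟨s₀, d, k, rfl⟩ : ∃ s₀ d k, s = linePos s₀ d k := by
    cases s with
    | nil => simp_all [closedNim]
    | cons a t => exact exists_eq_linePos_of_mem (d := b) (by simp_all)
  obtain ⟨hs₀, hk⟩ := isChain_linePos_append_iff.1 hs
  rw [closedNim_linePos] at h
  by_cases hlast : (k + if d = e then 0 else 1) % 2 = 1
  · obtain ⟨k, rfl⟩ : ∃ k', k = k' + 1 := by
      cases k with
      | zero => simp_all
      | succ k => exact ⟨k, rfl⟩
    refine ⟨linePos s₀ d k, [], e, by simp [linePos, List.replicate_succ'], ?_⟩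
    have hd : k = 0 → d = e := by intro hk0; subst hk0; by_contra hde; simp_all
    have : (linePos s₀ d k ++ [some e] ++ [some e]).IsChain Agrees :=
      List.isChain_append.2 ⟨isChain_linePos_append_iff.2 ⟨hs₀, hd⟩, by simp, by simp⟩
    simpa using this
  · have hb₀ : (s₀ ++ [some d]).head? = some (some b) := by
      cases s₀ <;> simp_all [linePos]
    obtain ⟨u, v, x, rfl, hc⟩ :=
      exists_legal_mark_of_closedNim_eq_one hb₀ hs₀ (by have := closedNim_lt_two b d s₀; omega)
    refine ⟨u, v ++ some d :: List.replicate k none, x, by simp [linePos], ?_⟩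
    have := isChain_linePos_append_iff.2 ⟨hc, hk⟩
    simpa [linePos] using this
termination_by s.length
decreasing_by subst_vars; simp [linePos]

theorem exists_closedNim_linePos_eq {b e : Bool} {s : List EdgeState} {j a : ℕ} (ha : a < 2)
    (h0 : j = 0 → a = closedNim b e s) :
    ∃ x, (j = 0 → e = x) ∧ closedNim b x (linePos s e j) = a := by
  have hP := closedNim_lt_two b e s
  by_cases hj : j = 0
  · subst hj
    exact ⟨e, fun _ => rfl, by rw [closedNim_linePos_zero, h0 rfl]⟩
  · refine ⟨if (closedNim b e s + j + a) % 2 = 0 then e else !e, fun h => absurd h hj, ?_⟩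
    rw [closedNim_linePos]
    split <;> cases e <;> simp <;> omega

theorem grundyAux_linePos (fuel : ℕ) : ∀ {b e : Bool} {s : List EdgeState} {m : ℕ},
    (s ++ [some e]).head? = some (some b) → LineOK false true false (linePos s e m) →
    (linePos s e m).count none ≤ fuel →
    grundyAux (lineMoves false true false) fuel (linePos s e m) = closedNim b e s ^^^ (m - 1) := by
  induction fuel with
  | zero =>
    intro b e s m _ hok hcount
    have := (lineOK_linePos_iff.1 hok).2
    simp [linePos, List.count_append] at hcount
    omega
  | succ fuel ih =>
    intro b e s m hb hok hcount
    have hs := (lineOK_linePos_iff.1 hok).1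
    have hP := closedNim_lt_two b e s
    have value {s' e' m'} (hmem : linePos s' e' m' ∈ lineMoves false true false (linePos s e m))
        (hb' : (s' ++ [some e']).head? = some (some b)) :
        grundyAux (lineMoves false true false) fuel (linePos s' e' m') =
          closedNim b e' s' ^^^ (m' - 1) :=
      ih hb' (lineOK_of_mem_lineMoves hmem)
        (by have := count_none_lt_of_mem_lineMoves hmem; omega)
    rw [grundyAux]
    refine mex_eq_of_notMem ?_ ?_
    · rintro ⟨L', hmem, hval⟩
      rcases (mem_lineMoves_linePos_iff hok).1 hmem with
        ⟨u, v, x, rfl, -, rfl⟩ | ⟨j, x, hj, hx, rfl⟩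
      · rw [value hmem (head?_mark hb), closedNim_mark, xor_eq_of_lt_two (by omega),
          xor_eq_of_lt_two hP] at hval
        omega
      · rw [value hmem (head?_linePos_append.trans hb)] at hval
        refine xor_ne_of_run_move hP (closedNim_lt_two _ _ _) hj (fun hj0 => ?_) hval
        subst hj0
        rw [← hx rfl, closedNim_linePos_zero]
    · intro w hw
      rcases lt_xor_sub_one_cases hP hw with ⟨j, a, hj, ha, h0, rfl⟩ | ⟨hP1, rfl⟩
      · obtain ⟨x, hx, hxa⟩ := exists_closedNim_linePos_eq ha h0
        have hmem := (mem_lineMoves_linePos_iff hok).2 (Or.inr ⟨j, x, hj, hx, rfl⟩)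
        exact ⟨_, hmem, by rw [value hmem (head?_linePos_append.trans hb), hxa]⟩
      · obtain ⟨u, v, x, rfl, hc⟩ := exists_legal_mark_of_closedNim_eq_one hb hs hP1
        have hmem := (mem_lineMoves_linePos_iff hok).2 (Or.inl ⟨u, v, x, rfl, hc, rfl⟩)
        exact ⟨_, hmem, by rw [value hmem (head?_mark hb), closedNim_mark]⟩

end LineGame

/-- For every `n ≥ 1`, the type-2 line sub-game of the standard
Game of Cycles (a pre-marked edge at the left end directed toward the path,
•→•—•⋯•—•) has Grundy value `n - 1`. -/
theorem line_type2_nimber_standard (n : ℕ) (hn : 1 ≤ n) :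
    lineNim false (some true) none n = n - 1 := by
  have hstart : lineNim false (some true) none n =
      grundyAux (lineMoves false true false) (n + 1) (LineGame.linePos [] true n) := by
    simp [lineNim, LineGame.linePos]
  rw [hstart, LineGame.grundyAux_linePos (n + 1) (b := true) rfl
    (LineGame.lineOK_linePos_iff.2 ⟨by simp, by omega⟩) (by simp [LineGame.linePos])]
  simp [LineGame.closedNim]
end

section
/- Let k be a positive integer, let S : Fin k → Set (Fin k × Fin k), let V : Fin k → (Fin k × Fin k) → ℕ → ℕ → Prop be a validity predicate such that V i (p,q) a b implies (p,q) ∈ S i, and let G : Fin k → ℕ → ℕ satisfy the Sprague–Grundy recursion G i n = mex { G p a XOR G q b | (p,q) ∈ Fin k × Fin k, a + b + 1 = n, V i (p,q) a b } for all i and all n ≥ 1. Let T and s be positive integers with s ≥ T. Suppose: (1) for all a, b ≥ s − T and all (p,q) ∈ S i, V i (p,q) a b holds; (2) if a < s − T and V i (p,q) a b fails for some b ≥ s − T, then V i (p,q) a b' fails for every natural number b'; (3) symmetrically, if b < s − T and V i (p,q) a b fails for some a ≥ s − T, then V i (p,q) a' b fails for every natural number a'. Suppose furthermore that for all n with s +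 1 ≤ n ≤ 2s + 1 and all i ∈ Fin k, G i n = G i (n − T). Then for all n ≥ s + 1 and all i ∈ Fin k, G i n = G i (n − T). -/
def grundyOptions {ι : Type*} (V : ι → ι × ι → ℕ → ℕ → Prop) (G : ι → ℕ → ℕ) (i : ι) (n : ℕ) :
    Set ℕ :=
  {m | ∃ (p q : ι) (a b : ℕ), a + b + 1 = n ∧ V i (p, q) a b ∧ m = Nat.xor (G p a) (G q b)}

section Shift

variable {ι : Type*} {S : ι → Set (ι × ι)} {V : ι → ι × ι → ℕ → ℕ → Prop} {c : ℕ}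

theorem valid_of_valid_of_le_right (hVS : ∀ i pq a b, V i pq a b → pq ∈ S i)
    (h1 : ∀ i pq a b, pq ∈ S i → c ≤ a → c ≤ b → V i pq a b)
    (h2 : ∀ i pq a b, a < c → c ≤ b → ¬ V i pq a b → ∀ b', ¬ V i pq a b')
    {i : ι} {pq : ι × ι} {a b b' : ℕ} (hV : V i pq a b) (hb' : c ≤ b') : V i pq a b' := by
  by_cases ha : c ≤ a
  · exact h1 i pq a b' (hVS i pq a b hV) ha hb'
  · by_contra hV'
    exact h2 i pq a b' (not_le.mp ha) hb' hV' b hV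

theorem valid_of_valid_of_le_left (hVS : ∀ i pq a b, V i pq a b → pq ∈ S i)
    (h1 : ∀ i pq a b, pq ∈ S i → c ≤ a → c ≤ b → V i pq a b)
    (h3 : ∀ i pq a b, b < c → c ≤ a → ¬ V i pq a b → ∀ a', ¬ V i pq a' b)
    {i : ι} {pq : ι × ι} {a a' b : ℕ} (hV : V i pq a b) (ha' : c ≤ a') : V i pq a' b := by
  by_cases hb : c ≤ b
  · exact h1 i pq a' b (hVS i pq a b hV) ha' hb
  · by_contra hV'
    exact h3 i pq a' b (not_le.mp hb) ha' hV' a hV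

variable {G : ι → ℕ → ℕ}

theorem xor_mem_grundyOptions_of_shift_right (hVS : ∀ i pq a b, V i pq a b → pq ∈ S i)
    (h1 : ∀ i pq a b, pq ∈ S i → c ≤ a → c ≤ b → V i pq a b)
    (h2 : ∀ i pq a b, a < c → c ≤ b → ¬ V i pq a b → ∀ b', ¬ V i pq a b')
    {i p q : ι} {a b b' : ℕ} (hV : V i (p, q) a b) (hb' : c ≤ b') (hGb : G q b' = G q b) :
    Nat.xor (G p a) (G q b) ∈ grundyOptions V G i (a + b' + 1) :=
  ⟨p, q, a, b', rfl, valid_of_valid_of_le_right hVS h1 h2 hV hb', by rw [hGb]⟩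

theorem xor_mem_grundyOptions_of_shift_left (hVS : ∀ i pq a b, V i pq a b → pq ∈ S i)
    (h1 : ∀ i pq a b, pq ∈ S i → c ≤ a → c ≤ b → V i pq a b)
    (h3 : ∀ i pq a b, b < c → c ≤ a → ¬ V i pq a b → ∀ a', ¬ V i pq a' b)
    {i p q : ι} {a a' b : ℕ} (hV : V i (p, q) a b) (ha' : c ≤ a') (hGa : G p a' = G p a) :
    Nat.xor (G p a) (G q b) ∈ grundyOptions V G i (a' + b + 1) :=
  ⟨p, q, a', b, rfl, valid_of_valid_of_le_left hVS h1 h3 hV ha', by rw [hGa]⟩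

end Shift

theorem grundyOptions_eq_of_periodic_below {ι : Type*} {S : ι → Set (ι × ι)}
    {V : ι → ι × ι → ℕ → ℕ → Prop} {G : ι → ℕ → ℕ} {T s n : ℕ}
    (hVS : ∀ i pq a b, V i pq a b → pq ∈ S i)
    (h1 : ∀ i pq a b, pq ∈ S i → s - T ≤ a → s - T ≤ b → V i pq a b)
    (h2 : ∀ i pq a b, a < s - T → s - T ≤ b → ¬ V i pq a b → ∀ b', ¬ V i pq a b')
    (h3 : ∀ i pq a b, b < s - T → s - T ≤ a → ¬ V i pq a b → ∀ a', ¬ V i pq a' b)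
    (hsT : T ≤ s) (hn : 2 * s + 1 < n)
    (hper : ∀ m, s + 1 ≤ m → m < n → ∀ q, G q m = G q (m - T)) (i : ι) :
    grundyOptions V G i n = grundyOptions V G i (n - T) := by
  ext m
  constructor
  · rintro ⟨p, q, a, b, rfl, hV, rfl⟩
    by_cases hb : s + 1 ≤ b
    · have hsplit : a + b + 1 - T = a + (b - T) + 1 := by omega
      rw [hsplit]
      exact xor_mem_grundyOptions_of_shift_right hVS h1 h2 hV (by omega)
        (hper b hb (by omega) q).symm
    · have hsplit : a + b + 1 - T = a - T + b + 1 := by omega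
      rw [hsplit]
      exact xor_mem_grundyOptions_of_shift_left hVS h1 h3 hV (by omega)
        (hper a (by omega) (by omega) p).symm
  · rintro ⟨p, q, a, b, hab, hV, rfl⟩
    by_cases hb : s - T < b
    · have hsplit : n = a + (b + T) + 1 := by omega
      rw [hsplit]
      refine xor_mem_grundyOptions_of_shift_right hVS h1 h2 hV (by omega) ?_
      simpa using hper (b + T) (by omega) (by omega) q
    · have hsplit : n = a + T + b + 1 := by omega
      rw [hsplit]
      refine xor_mem_grundyOptions_of_shift_left hVS h1 h3 hV (by omega) ?_
      simpa using hper (a + T) (by omega) (by omega) p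

theorem grundy_eventually_periodic_general
    (k : ℕ)
    (S : Fin k → Set (Fin k × Fin k))
    (V : Fin k → Fin k × Fin k → ℕ → ℕ → Prop)
    (hVS : ∀ i pq a b, V i pq a b → pq ∈ S i)
    (G : Fin k → ℕ → ℕ)
    (hG : ∀ i n, 1 ≤ n → G i n =
      mex {m | ∃ (p q : Fin k) (a b : ℕ), a + b + 1 = n ∧ V i (p, q) a b ∧
        m = Nat.xor (G p a) (G q b)})
    (T s : ℕ) (hsT : T ≤ s)
    (h1 : ∀ i (pq : Fin k × Fin k) a b,
      pq ∈ S i → s - T ≤ a → s - T ≤ b → V i pq a b)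
    (h2 : ∀ i pq a b, a < s - T → s - T ≤ b → ¬ V i pq a b →
      ∀ b', ¬ V i pq a b')
    (h3 : ∀ i pq a b, b < s - T → s - T ≤ a → ¬ V i pq a b →
      ∀ a', ¬ V i pq a' b)
    (hbase : ∀ n, s + 1 ≤ n → n ≤ 2 * s + 1 → ∀ i : Fin k, G i n = G i (n - T)) :
    ∀ n, s + 1 ≤ n → ∀ i : Fin k, G i n = G i (n - T) := by
  intro n
  induction n using Nat.strong_induction_on with
  | _ n ih =>
  intro hn i
  rcases le_or_gt n (2 * s + 1) with hsmall | hlarge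
  · exact hbase n hn hsmall i
  rw [hG i n (by omega), hG i (n - T) (by omega)]
  exact congrArg mex <| grundyOptions_eq_of_periodic_below hVS h1 h2 h3 hsT hlarge
    (fun m hm hmn q => ih m hmn hm q) i

/-- Periodicity transfer theorem for families of impartial games
`g_i(n)` (`i ∈ Fin k`) whose every playable move `(p, q, a, b)` splits `g_i(n)`
into the disjoint sum of `g_p(a)` and `g_q(b)` with `a + b + 1 = n`, so that the
Grundy values `G` satisfy the Sprague–Grundy recursion
`G i n = mex {G p a XOR G q b | (p,q,a,b) a valid move on g_i(n)}`.
If validity satisfies conditions (1)–(3) below and the period-`T` coincidence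
`G i n = G i (n - T)` holds for all `n ∈ [s+1, 2s+1]`, then it holds for all
`n ≥ s + 1`. -/
theorem grundy_eventually_periodic
    (k : ℕ) (hk : 0 < k)
    (S : Fin k → Set (Fin k × Fin k))
    (V : Fin k → Fin k × Fin k → ℕ → ℕ → Prop)
    (hVS : ∀ i pq a b, V i pq a b → pq ∈ S i)
    (G : Fin k → ℕ → ℕ)
    (hG : ∀ i n, 1 ≤ n → G i n =
      mex {m | ∃ (p q : Fin k) (a b : ℕ), a + b + 1 = n ∧ V i (p, q) a b ∧
        m = Nat.xor (G p a) (G q b)})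
    (T s : ℕ) (hT : 0 < T) (hs : 0 < s) (hsT : T ≤ s)
    (h1 : ∀ i (pq : Fin k × Fin k) a b,
      pq ∈ S i → s - T ≤ a → s - T ≤ b → V i pq a b)
    (h2 : ∀ i pq a b, a < s - T → s - T ≤ b → ¬ V i pq a b →
      ∀ b', ¬ V i pq a b')
    (h3 : ∀ i pq a b, b < s - T → s - T ≤ a → ¬ V i pq a b →
      ∀ a', ¬ V i pq a' b)
    (hbase : ∀ n, s + 1 ≤ n → n ≤ 2 * s + 1 → ∀ i : Fin k, G i n = G i (n - T)) :
    ∀ n, s + 1 ≤ n → ∀ i : Fin k, G i n = G i (n - T) :=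
  grundy_eventually_periodic_general k S V hVS G hG T s hsT h1 h2 h3 hbase
end

section
/- In the standard Game of Cycles, consider the line games obtained by cutting a cycle along a marked edge: a path of n unmarked edges with pre-marked directed edges at both ends, either both pointing into the path (•→•—•⋯•—•←•) or both pointing away from the path (•←•—•⋯•—•→•), where the boundary nodes at the far ends (the endpoints of the pre-marked edges not on the path) are entirely exempt from the no-source/no-sink restriction. For every n ≥ 1, each of these two games has Grundy value 0 if n is odd and 1 if n is even. -/
/-!
With both far endpoints exempt and sources forbidden, a position is legal exactly when any two
adjacent marked edges point the same way. Every move marks one edge, so the number of unmarked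
edges drops by one per move. In a position with no legal move, each unmarked edge sits between
two marked edges of opposite orientation, so along the path the orientation flips precisely at
the unmarked edges; since the two pre-marked end edges point opposite ways, an odd number of
edges is then unmarked. So every option of a position with `m` unmarked edges has `m - 1` of
them, play can only stop at odd `m`, and induction on `m` gives Grundy value `0` for odd `m`
and `1` for even `m`.
-/

theorem mex_eq_zero {S : Set ℕ} (h : 0 ∉ S) : mex S = 0 :=
  Nat.sInf_eq_zero.mpr (Or.inl h)

theorem mex_eq_one {S : Set ℕ} (h0 : 0 ∈ S) (h1 : 1 ∉ S) : mex S = 1 := by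
  have hle : mex S ≤ 1 := Nat.sInf_le h1
  have hmem : mex S ∉ S := Nat.sInf_mem (s := {n | n ∉ S}) ⟨1, h1⟩
  have hne : mex S ≠ 0 := fun h => hmem (h ▸ h0)
  omega

theorem grundyAux_eq_of_parity {α : Type} {moves : α → Set α} (P : α → Prop) (μ : α → ℕ)
    (hmove : ∀ x, P x → ∀ y ∈ moves x, P y ∧ μ y + 1 = μ x)
    (hend : ∀ x, P x → moves x = ∅ → Odd (μ x)) :
    ∀ fuel x, P x → μ x ≤ fuel → grundyAux moves fuel x = if Odd (μ x) then 0 else 1 := by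
  intro fuel
  induction fuel with
  | zero =>
    intro x hx hμ
    obtain ⟨y, hy⟩ := Set.nonempty_iff_ne_empty.mpr fun h => by
      simpa [Nat.le_zero.mp hμ] using hend x hx h
    have := (hmove x hx y hy).2
    omega
  | succ f ih =>
    intro x hx hμ
    have hopt : ∀ y ∈ moves x, grundyAux moves f y = if Odd (μ x) then 1 else 0 := by
      intro y hy
      obtain ⟨hPy, hμy⟩ := hmove x hx y hy
      rw [ih y hPy (by omega), ← hμy]
      by_cases h : Odd (μ y) <;> simp [h, Nat.odd_add_one]
    rw [grundyAux]
    split_ifs with hodd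
    · apply mex_eq_zero
      rintro ⟨y, hy, hy0⟩
      simp [hopt y hy, hodd] at hy0
    · obtain ⟨y, hy⟩ := Set.nonempty_iff_ne_empty.mpr fun h => hodd (hend x hx h)
      refine mex_eq_one ⟨y, hy, by simp [hopt y hy, hodd]⟩ ?_
      rintro ⟨z, hz, hz1⟩
      simp [hopt z hz, hodd] at hz1

theorem List.head?_set_of_ne {α : Type*} {l : List α} {i : ℕ} (x : α) (h : l[i]? ≠ l.head?) :
    (l.set i x).head? = l.head? := by
  have hi : i ≠ 0 := by rintro rfl; exact h l.head?_eq_getElem?.symm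
  simp [List.head?_eq_getElem?, hi]

theorem List.getLast?_set_of_ne {α : Type*} {l : List α} {i : ℕ} (x : α)
    (h : l[i]? ≠ l.getLast?) : (l.set i x).getLast? = l.getLast? := by
  have hi : i ≠ l.length - 1 := by rintro rfl; exact h l.getLast?_eq_getElem?.symm
  simp [List.getLast?_eq_getElem?, hi]

namespace GameOfCycles

def Coherent (es : List EdgeState) : Prop :=
  ∀ j (c d : Bool), es[j]? = some (some c) → es[j+1]? = some (some d) → c = d

/-- Both ways of marking any unmarked edge would create a sink or a source. The edge at index
`0` is not constrained; it is pre-marked in all positions considered below. -/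
def Stuck (es : List EdgeState) : Prop :=
  ∀ j, es[j+1]? = some none → ∃ c : Bool, es[j]? = some (some c) ∧ es[j+2]? = some (some !c)

theorem lineOK_iff_coherent (es : List EdgeState) :
    LineOK false true true es ↔ Coherent es := by
  constructor
  · rintro ⟨hsink, hsource | hsource, -, -⟩ j c d hc hd
    · cases hsource
    · cases c <;> cases d
      · rfl
      · exact absurd ⟨hc, hd⟩ (hsource j)
      · exact absurd ⟨hc, hd⟩ (hsink j)
      · rfl
  · intro h
    exact ⟨fun j ⟨hc, hd⟩ => Bool.noConfusion (h j _ _ hc hd),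
      Or.inr fun j ⟨hc, hd⟩ => Bool.noConfusion (h j _ _ hc hd), Or.inl rfl, Or.inl rfl⟩

@[simp] theorem coherent_nil : Coherent [] := by
  simp [Coherent]

theorem coherent_cons_iff {x : EdgeState} {es : List EdgeState} :
    Coherent (x :: es) ↔
      (∀ c d, x = some c → es.head? = some (some d) → c = d) ∧ Coherent es := by
  constructor
  · intro h
    exact ⟨fun c d hc hd => h 0 c d (by simp [hc]) (by simpa [List.head?_eq_getElem?] using hd),
      fun j c d hc hd => h (j+1) c d (by simpa using hc) (by simpa using hd)⟩
  · rintro ⟨hhead, htail⟩ (_ | j) c d hc hd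
    · exact hhead c d (by simpa using hc) (by simpa [List.head?_eq_getElem?] using hd)
    · exact htail j c d (by simpa using hc) (by simpa using hd)

theorem Coherent.tail {x : EdgeState} {es : List EdgeState} (h : Coherent (x :: es)) :
    Coherent es :=
  (coherent_cons_iff.mp h).2

theorem Stuck.tail {x : EdgeState} {es : List EdgeState} (h : Stuck (x :: es)) : Stuck es := by
  intro j hj
  obtain ⟨c, hc, hc2⟩ := h (j+1) (by simpa using hj)
  exact ⟨c, by simpa using hc, by simpa using hc2⟩

theorem even_count_none_iff_of_stuck : ∀ {a b : Bool} {es : List EdgeState},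
    Coherent (some a :: es) → Stuck (some a :: es) → (some a :: es).getLast? = some (some b) →
    (Even ((some a :: es).count none) ↔ a = b)
  | a, b, [], _, _, hlast => by simp_all
  | a, b, some c :: es, hcoh, hstuck, hlast => by
    obtain rfl : a = c := hcoh 0 a c rfl rfl
    simpa [List.count_cons] using
      even_count_none_iff_of_stuck hcoh.tail hstuck.tail (by simpa using hlast)
  | a, b, [none], _, hstuck, _ => by simpa using hstuck 0 rfl
  | a, b, none :: none :: es, _, hstuck, _ => by simpa using hstuck 0 rfl
  | a, b, none :: some c :: es, hcoh, hstuck, hlast => by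
    obtain rfl : c = !a := by simpa using hstuck 0 rfl
    have ih := even_count_none_iff_of_stuck hcoh.tail.tail hstuck.tail.tail (by simpa using hlast)
    simp only [List.count_cons] at ih ⊢
    cases a <;> cases b <;> simp_all [Nat.even_add_one]

theorem Coherent.eq_not_of_not_coherent_set {L : List EdgeState} {j : ℕ} (d : Bool)
    (hL : Coherent L) (hj : L[j+1]? = some none) (h : ¬ Coherent (L.set (j+1) (some d))) :
    L[j]? = some (some !d) ∨ L[j+2]? = some (some !d) := by
  simp only [Coherent, not_forall] at h
  obtain ⟨i, c, c', hc, hc', hne⟩ := h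
  have hlt : j + 1 < L.length := (List.getElem?_eq_some_iff.mp hj).1
  simp only [List.getElem?_set, hlt, if_true] at hc hc'
  by_cases hij : i = j
  · subst hij
    simp only [Nat.succ_ne_self, if_false, if_true, Option.some.injEq] at hc hc'
    left
    rw [hc, hc', Bool.eq_not_of_ne hne]
  by_cases hij' : i = j + 1
  · subst hij'
    simp only [if_true, Option.some.injEq] at hc
    rw [if_neg (by omega)] at hc'
    right
    subst hc
    rw [hc', Bool.eq_not_of_ne (Ne.symm hne)]
  · simp only [show j + 1 ≠ i by omega, show j + 1 ≠ i + 1 by omega, if_false] at hc hc'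
    exact absurd (hL i c c' hc hc') hne

theorem stuck_of_lineMoves_eq_empty {L : List EdgeState} (hL : Coherent L)
    (h : lineMoves false true true L = ∅) : Stuck L := by
  intro j hj
  have hblocked (d : Bool) : L[j]? = some (some !d) ∨ L[j+2]? = some (some !d) :=
    hL.eq_not_of_not_coherent_set d hj fun hcoh =>
      h.subset ⟨j+1, d, hj, rfl, (lineOK_iff_coherent _).mpr hcoh⟩
  rcases hblocked true with h1 | h1 <;> rcases hblocked false with h2 | h2
  · simp [h1] at h2
  · exact ⟨false, h1, h2⟩
  · exact ⟨true, h2, h1⟩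
  · simp [h1] at h2

def Framed (a b : Bool) (L : List EdgeState) : Prop :=
  Coherent L ∧ L.head? = some (some a) ∧ L.getLast? = some (some b)

theorem Framed.of_mem_lineMoves {a b : Bool} {L L' : List EdgeState} (hL : Framed a b L)
    (h : L' ∈ lineMoves false true true L) :
    Framed a b L' ∧ L'.count none + 1 = L.count none := by
  obtain ⟨hcoh, hhead, hlast⟩ := hL
  obtain ⟨j, d, hj, rfl, hok⟩ := h
  have hlt : j < L.length := (List.getElem?_eq_some_iff.mp hj).1
  have hpos : 0 < L.count none := List.count_pos_iff.mpr (List.mem_of_getElem? hj)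
  refine ⟨⟨(lineOK_iff_coherent _).mp hok, ?_, ?_⟩, ?_⟩
  · rw [List.head?_set_of_ne _ (by simp [hj, hhead]), hhead]
  · rw [List.getLast?_set_of_ne _ (by simp [hj, hlast]), hlast]
  · rw [List.count_set hlt, (List.getElem?_eq_some_iff.mp hj).2]
    simp only [beq_self_eq_true, if_true, reduceCtorEq, beq_iff_eq, if_false]
    omega

theorem Framed.odd_count_none_of_stuck {a b : Bool} {L : List EdgeState} (hL : Framed a b L)
    (hab : a ≠ b) (hstuck : Stuck L) : Odd (L.count none) := by
  obtain ⟨hcoh, hhead, hlast⟩ := hL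
  obtain ⟨es, rfl⟩ := List.head?_eq_some_iff.mp hhead
  simpa [hab] using even_count_none_iff_of_stuck hcoh hstuck hlast

theorem grundyAux_of_framed {a b : Bool} (hab : a ≠ b) (fuel : ℕ) {L : List EdgeState}
    (hL : Framed a b L) (hfuel : L.count none ≤ fuel) :
    grundyAux (lineMoves false true true) fuel L = if Odd (L.count none) then 0 else 1 :=
  grundyAux_eq_of_parity (Framed a b) (List.count none)
    (fun _ hx _ hy => hx.of_mem_lineMoves hy)
    (fun _ hx h => hx.odd_count_none_of_stuck hab (stuck_of_lineMoves_eq_empty hx.1 h))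
    fuel L hL hfuel

theorem coherent_replicate_none_append (k : ℕ) (b : Bool) :
    Coherent (List.replicate k none ++ [some b]) := by
  induction k with
  | zero => simp [coherent_cons_iff]
  | succ k ih => simpa [List.replicate_succ, coherent_cons_iff] using ih

theorem lineNim_of_ne {a b : Bool} (hab : a ≠ b) {n : ℕ} (hn : 1 ≤ n) :
    lineNim false (some a) (some b) n = if Odd n then 0 else 1 := by
  obtain ⟨k, rfl⟩ : ∃ k, n = k + 1 := ⟨n - 1, by omega⟩
  have hframed : Framed a b (some a :: (List.replicate (k + 1) none ++ [some b])) :=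
    ⟨by simpa [List.replicate_succ, coherent_cons_iff] using coherent_replicate_none_append k b,
      rfl, by rw [← List.cons_append, List.getLast?_concat]⟩
  unfold lineNim
  simpa using grundyAux_of_framed hab (k + 3) hframed (by simp)

end GameOfCycles

/-- Cutting a cycle along a marked edge in the standard Game of
Cycles can also yield a path of `n` unmarked edges with pre-marked directed edges at
both ends either both pointing into the path (•→•—•⋯•—•←•) or both pointing away
from the path (•←•—•⋯•—•→•), the two far-end boundary nodes being exempt from the
no-source/no-sink rule. For every `n ≥ 1`, each of these games has Grundy value `0`
if `n` is odd and `1` if `n` is even. -/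
theorem cut_cycle_type2_type3_nimber_standard (n : ℕ) (hn : 1 ≤ n) :
    lineNim false (some true) (some false) n = (if Odd n then 0 else 1) ∧
    lineNim false (some false) (some true) n = (if Odd n then 0 else 1) :=
  ⟨GameOfCycles.lineNim_of_ne (by decide) hn, GameOfCycles.lineNim_of_ne (by decide) hn⟩
end
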